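/- arXiv:2410.02400 — 3 statements merged into one kernel-verified Lean document; each statement's English description precedes it below -/
import Mathlib

section
/- Let f_t: ℝ^d → ℝ be μ-strongly convex and differentiable, let S_t ⊂ ℝ^d be closed, nonempty, convex with max_{a ∈ S_t} dist(S_{t+1}, a) ≤ ω_{t+1}, and consider x_{t+1} = proj_{S_{t+1}}(x_t − η_t ∇f_t(x_t)) with η_t = 1/(tμ), ‖∇f_t(x_t)‖ ≤ G, x_1 ∈ S_1. Then for any u ∈ ℝ^d, ∑_{t=1}^T (f_t(x_t) − f_t(u)) ≤ (G²/μ)(1 + log T) + ∑_{t=1}^{T−1} (ω_{t+1}/η_t + G) dist(S_{t+1}, u). -/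
/-!
Write `y = x_t - η_t g_t` for the unprojected step. Strong convexity and the expansion of
`‖y - u‖²` bound the regret of round `t` by
`(1/(2η_t) - μ/2) ‖x_t - u‖² - 1/(2η_t) ‖y - u‖² + η_t G²/2`.
Projecting `y` onto the convex set `S_{t+1}` can increase the distance to `u` only through the
distance of `u` from `S_{t+1}`: `‖x_{t+1} - u‖² ≤ ‖y - u‖² + 2 ‖x_{t+1} - y‖ dist(u, S_{t+1})`,
and `‖x_{t+1} - y‖ ≤ ω_{t+1} + η_t G` because `x_t` lies within `ω_{t+1}` of `S_{t+1}`.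
For `η_t = 1/(tμ)` one has `1/(2η_t) - μ/2 = 1/(2η_{t-1})`, so the quadratic terms telescope,
and the remaining `G²/(2tμ)` sum to at most `(G²/μ)(1 + log T)`.
-/

open RealInnerProductSpace Finset Metric

theorem le_add_mul_infDist {X : Type*} [PseudoMetricSpace X] {s : Set X} {x : X} {a b c : ℝ}
    (hs : s.Nonempty) (hb : 0 ≤ b) (h : ∀ y ∈ s, c ≤ a + b * dist x y) :
    c ≤ a + b * infDist x s := by
  rcases hb.eq_or_lt with rfl | hb
  · simpa using h _ hs.some_mem
  have : (c - a) / b ≤ infDist x s :=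
    (le_infDist hs).2 fun y hy => by rw [div_le_iff₀ hb]; linarith [h y hy]
  rw [div_le_iff₀ hb] at this
  linarith

theorem norm_sub_le_infDist_of_isMinOn {E : Type*} [SeminormedAddCommGroup E] {K : Set E}
    {p y : E} (hp : p ∈ K)
    (hmin : IsMinOn (fun z => ‖z - y‖) K p) : ‖p - y‖ ≤ infDist y K :=
  (le_infDist ⟨p, hp⟩).2 fun z hz => by rw [dist_comm, dist_eq_norm]; exact hmin hz

section
variable {E : Type*} [NormedAddCommGroup E] [InnerProductSpace ℝ E]

theorem inner_sub_le_zero_of_isMinOn {K : Set E} {p y : E} (hK : Convex ℝ K) (hp : p ∈ K)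
    (hmin : IsMinOn (fun z => ‖z - y‖) K p) {v : E} (hv : v ∈ K) : ⟪y - p, v - p⟫ ≤ 0 := by
  refine (norm_eq_iInf_iff_real_inner_le_zero hK hp).1 ?_ v hv
  simpa only [norm_sub_rev y] using (hmin.iInf_eq hp).symm

theorem norm_sub_le_of_isMinOn {K : Set E} {p y : E} (hK : Convex ℝ K) (hp : p ∈ K)
    (hmin : IsMinOn (fun z => ‖z - y‖) K p) {v : E} (hv : v ∈ K) : ‖p - v‖ ≤ ‖y - v‖ := by
  have hexp : ‖y - v‖ ^ 2 = ‖y - p‖ ^ 2 - 2 * ⟪y - p, v - p⟫ + ‖v - p‖ ^ 2 := by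
    rw [← norm_sub_sq_real, sub_sub_sub_cancel_right]
  have hsq : ‖p - v‖ ^ 2 ≤ ‖y - v‖ ^ 2 := by
    rw [norm_sub_rev p]
    linarith [inner_sub_le_zero_of_isMinOn hK hp hmin hv, sq_nonneg ‖y - p‖]
  exact (pow_le_pow_iff_left₀ (norm_nonneg _) (norm_nonneg _) two_ne_zero).1 hsq

theorem sq_norm_sub_le_of_isMinOn {K : Set E} {p y : E} (hK : Convex ℝ K) (hp : p ∈ K)
    (hmin : IsMinOn (fun z => ‖z - y‖) K p) (u : E) :
    ‖p - u‖ ^ 2 ≤ ‖y - u‖ ^ 2 + 2 * ‖p - y‖ * infDist u K := by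
  refine le_add_mul_infDist ⟨p, hp⟩ (by positivity) fun v hv => ?_
  have hp_exp : ‖p - u‖ ^ 2 = ‖p - v‖ ^ 2 - 2 * ⟪p - v, u - v⟫ + ‖u - v‖ ^ 2 := by
    rw [← norm_sub_sq_real, sub_sub_sub_cancel_right]
  have hy_exp : ‖y - u‖ ^ 2 = ‖y - v‖ ^ 2 - 2 * ⟪y - v, u - v⟫ + ‖u - v‖ ^ 2 := by
    rw [← norm_sub_sq_real, sub_sub_sub_cancel_right]
  have hinner : ⟪p - v, u - v⟫ - ⟪y - v, u - v⟫ = ⟪p - y, u - v⟫ := by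
    rw [← inner_sub_left, sub_sub_sub_cancel_right]
  have hcs := neg_le_of_abs_le (abs_real_inner_le_norm (p - y) (u - v))
  have hproj := pow_le_pow_left₀ (norm_nonneg _) (norm_sub_le_of_isMinOn hK hp hmin hv) 2
  rw [dist_eq_norm]
  linarith

theorem sub_le_of_strongConvex_gradient_step {f : E → ℝ} {μ η : ℝ} {x g u : E} (hη : 0 < η)
    (hsc : f u ≥ f x + ⟪g, u - x⟫ + μ / 2 * ‖u - x‖ ^ 2) :
    f x - f u ≤ (1 / (2 * η) - μ / 2) * ‖x - u‖ ^ 2 - 1 / (2 * η) * ‖x - η • g - u‖ ^ 2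
      + η / 2 * ‖g‖ ^ 2 := by
  have hstep : ‖x - η • g - u‖ ^ 2 = ‖x - u‖ ^ 2 - 2 * η * ⟪g, x - u⟫ + η ^ 2 * ‖g‖ ^ 2 := by
    rw [sub_right_comm, norm_sub_sq_real, real_inner_smul_right, norm_smul, mul_pow,
      Real.norm_of_nonneg hη.le, real_inner_comm]
    ring
  have hflip : ⟪g, u - x⟫ = -⟪g, x - u⟫ := by rw [← inner_neg_right, neg_sub]
  rw [hflip, norm_sub_rev u] at hsc
  rw [hstep]
  field_simp
  linear_combination (2 * η) * hsc

theorem sub_add_sq_norm_le_of_projected_gradient_step {f : E → ℝ} {K : Set E} {μ η ω G : ℝ}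
    {x g u x' : E} (hη : 0 < η) (hsc : f u ≥ f x + ⟪g, u - x⟫ + μ / 2 * ‖u - x‖ ^ 2)
    (hK : Convex ℝ K) (hx' : x' ∈ K) (hmin : IsMinOn (fun z => ‖z - (x - η • g)‖) K x')
    (hω : infDist x K ≤ ω) (hG : ‖g‖ ≤ G) :
    f x - f u + 1 / (2 * η) * ‖x' - u‖ ^ 2 ≤
      (1 / (2 * η) - μ / 2) * ‖x - u‖ ^ 2 + η / 2 * G ^ 2 + (ω / η + G) * infDist u K := by
  have hdescent := sub_le_of_strongConvex_gradient_step hη hsc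
  have hproj := sq_norm_sub_le_of_isMinOn hK hx' hmin u
  have hmove : ‖x' - (x - η • g)‖ ≤ ω + η * G := calc
    ‖x' - (x - η • g)‖ ≤ infDist (x - η • g) K := norm_sub_le_infDist_of_isMinOn hx' hmin
    _ ≤ infDist x K + dist (x - η • g) x := infDist_le_infDist_add_dist
    _ = infDist x K + η * ‖g‖ := by
      rw [dist_eq_norm, sub_sub_cancel_left, norm_neg, norm_smul, Real.norm_of_nonneg hη.le]
    _ ≤ ω + η * G := by gcongr
  have hG2 : η / 2 * ‖g‖ ^ 2 ≤ η / 2 * G ^ 2 := by gcongr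
  have hmove_dist := mul_le_mul_of_nonneg_right hmove (infDist_nonneg (x := u) (s := K))
  have hscaled : 1 / (2 * η) * ‖x' - u‖ ^ 2 ≤ 1 / (2 * η) * ‖x - η • g - u‖ ^ 2
      + (ω / η + G) * infDist u K := calc
    1 / (2 * η) * ‖x' - u‖ ^ 2
        ≤ 1 / (2 * η) * (‖x - η • g - u‖ ^ 2 + 2 * ((ω + η * G) * infDist u K)) := by
      gcongr 1 / (2 * η) * ?_; linarith
    _ = 1 / (2 * η) * ‖x - η • g - u‖ ^ 2 + (ω / η + G) * infDist u K := by field_simp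
  linarith

theorem sub_add_sq_norm_le_of_projected_gradient_step_of_inv_mul {f : E → ℝ} {K : Set E}
    {μ s ω G : ℝ} {x g u x' : E} (hμ : 0 < μ) (hs : 0 < s)
    (hsc : f u ≥ f x + ⟪g, u - x⟫ + μ / 2 * ‖u - x‖ ^ 2) (hK : Convex ℝ K) (hx' : x' ∈ K)
    (hmin : IsMinOn (fun z => ‖z - (x - (1 / (s * μ)) • g)‖) K x')
    (hω : infDist x K ≤ ω) (hG : ‖g‖ ≤ G) :
    f x - f u + s * μ / 2 * ‖x' - u‖ ^ 2 ≤ (s - 1) * μ / 2 * ‖x - u‖ ^ 2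
      + G ^ 2 / (2 * μ) * s⁻¹ + (ω / (1 / (s * μ)) + G) * infDist u K := by
  have h := sub_add_sq_norm_le_of_projected_gradient_step (by positivity) hsc hK hx' hmin hω hG
  have hrate : 1 / (2 * (1 / (s * μ))) = s * μ / 2 := by field_simp
  have hgrad : 1 / (s * μ) / 2 * G ^ 2 = G ^ 2 / (2 * μ) * s⁻¹ := by field_simp
  rw [hrate, hgrad] at h
  linarith

theorem sub_le_of_strongConvex_gradient_step_of_inv_mul {f : E → ℝ} {μ s G : ℝ} {x g u : E}
    (hμ : 0 < μ) (hs : 0 < s) (hsc : f u ≥ f x + ⟪g, u - x⟫ + μ / 2 * ‖u - x‖ ^ 2)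
    (hG : ‖g‖ ≤ G) :
    f x - f u ≤ (s - 1) * μ / 2 * ‖x - u‖ ^ 2 + G ^ 2 / (2 * μ) * s⁻¹ := by
  have hη : 0 < 1 / (s * μ) := by positivity
  have h := sub_le_of_strongConvex_gradient_step hη hsc
  have hrate : 1 / (2 * (1 / (s * μ))) = s * μ / 2 := by field_simp
  have hgrad : 1 / (s * μ) / 2 * ‖g‖ ^ 2 ≤ G ^ 2 / (2 * μ) * s⁻¹ := calc
    1 / (s * μ) / 2 * ‖g‖ ^ 2 ≤ 1 / (s * μ) / 2 * G ^ 2 := by gcongr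
    _ = G ^ 2 / (2 * μ) * s⁻¹ := by field_simp
  have hdrop : 0 ≤ s * μ / 2 * ‖x - (1 / (s * μ)) • g - u‖ ^ 2 := by positivity
  rw [hrate] at h
  linarith

end

theorem sum_Icc_add_le_of_forall_add_le {a b Φ : ℕ → ℝ}
    (h : ∀ t, a (t + 1) + Φ (t + 1) ≤ Φ t + b (t + 1)) (n : ℕ) :
    ∑ t ∈ Icc 1 n, a t + Φ n ≤ Φ 0 + ∑ t ∈ Icc 1 n, b t := by
  induction n with
  | zero => simp
  | succ n ih =>
    rw [sum_Icc_succ_top (by omega), sum_Icc_succ_top (by omega)]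
    linarith [h n]

theorem sum_Icc_inv_le_one_add_log (n : ℕ) : ∑ t ∈ Icc 1 n, (t : ℝ)⁻¹ ≤ 1 + Real.log n := by
  simpa [harmonic_eq_sum_Icc] using harmonic_le_one_add_log n

theorem ogd_strongly_convex_time_varying_sets_regret_general {d T : ℕ} (hT : 1 ≤ T)
    (f : ℕ → EuclideanSpace ℝ (Fin d) → ℝ)
    (g : ℕ → EuclideanSpace ℝ (Fin d) → EuclideanSpace ℝ (Fin d))
    (S : ℕ → Set (EuclideanSpace ℝ (Fin d)))
    (x : ℕ → EuclideanSpace ℝ (Fin d))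
    (ω : ℕ → ℝ) (μ G : ℝ) (hμ : 0 < μ) (u : EuclideanSpace ℝ (Fin d))
    (hsc : ∀ t z w, f t z ≥ f t w + ⟪g t w, z - w⟫ + μ / 2 * ‖z - w‖ ^ 2)
    (hSconv : ∀ t, Convex ℝ (S t))
    (hω : ∀ t, ∀ a ∈ S t, Metric.infDist a (S (t + 1)) ≤ ω (t + 1))
    (hG : ∀ t, ‖g t (x t)‖ ≤ G)
    (hproj : ∀ t, x (t + 1) ∈ S (t + 1) ∧
      ∀ z ∈ S (t + 1),
        ‖x (t + 1) - (x t - (1 / (t * μ)) • g t (x t))‖ ≤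
          ‖z - (x t - (1 / (t * μ)) • g t (x t))‖) :
    ∑ t ∈ Icc 1 T, (f t (x t) - f t u) ≤
      G ^ 2 / μ * (1 + Real.log T) +
        ∑ t ∈ Icc 1 (T - 1),
          (ω (t + 1) / (1 / (t * μ)) + G) * Metric.infDist u (S (t + 1)) := by
  obtain ⟨n, rfl⟩ : ∃ n, T = n + 1 := ⟨T - 1, by omega⟩
  set Φ : ℕ → ℝ := fun t => t * μ / 2 * ‖x (t + 1) - u‖ ^ 2
  set c : ℕ → ℝ := fun t => G ^ 2 / (2 * μ) * (t : ℝ)⁻¹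
  set D : ℕ → ℝ := fun t => (ω (t + 1) / (1 / (t * μ)) + G) * infDist u (S (t + 1))
  have hround (t : ℕ) :
      f (t + 1) (x (t + 1)) - f (t + 1) u + Φ (t + 1) ≤ Φ t + (c (t + 1) + D (t + 1)) := by
    have h := sub_add_sq_norm_le_of_projected_gradient_step_of_inv_mul hμ (by positivity)
      (hsc (t + 1) u (x (t + 1))) (hSconv (t + 2)) (hproj (t + 1)).1
      (isMinOn_iff.2 (hproj (t + 1)).2) (hω (t + 1) _ (hproj t).1) (hG (t + 1))
    simp only [Φ, c, D]
    push_cast at h ⊢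
    linarith
  have hlast : f (n + 1) (x (n + 1)) - f (n + 1) u ≤ Φ n + c (n + 1) := by
    have h := sub_le_of_strongConvex_gradient_step_of_inv_mul hμ (by positivity : (0 : ℝ) < n + 1)
      (hsc (n + 1) u (x (n + 1))) (hG (n + 1))
    simp only [Φ, c]
    push_cast
    linarith
  have htel := sum_Icc_add_le_of_forall_add_le
    (a := fun t => f t (x t) - f t u) (b := fun t => c t + D t) hround n
  have hharm : ∑ t ∈ Icc 1 (n + 1), c t ≤ G ^ 2 / μ * (1 + Real.log (n + 1 : ℕ)) := calc
    ∑ t ∈ Icc 1 (n + 1), c t = G ^ 2 / (2 * μ) * ∑ t ∈ Icc 1 (n + 1), (t : ℝ)⁻¹ := by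
      rw [mul_sum]
    _ ≤ G ^ 2 / (2 * μ) * (1 + Real.log (n + 1 : ℕ)) := by
      gcongr; exact sum_Icc_inv_le_one_add_log _
    _ ≤ G ^ 2 / μ * (1 + Real.log (n + 1 : ℕ)) := by
      have : 0 ≤ Real.log (n + 1 : ℕ) := Real.log_natCast_nonneg _
      gcongr; linarith
  have hΦ0 : Φ 0 = 0 := by simp [Φ]
  rw [sum_add_distrib, hΦ0] at htel
  rw [sum_Icc_succ_top (by omega)] at hharm
  simp only [Nat.add_sub_cancel]
  rw [sum_Icc_succ_top (by omega)]
  linarith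

theorem ogd_strongly_convex_time_varying_sets_regret {d T : ℕ} (hT : 1 ≤ T)
    (f : ℕ → EuclideanSpace ℝ (Fin d) → ℝ)
    (g : ℕ → EuclideanSpace ℝ (Fin d) → EuclideanSpace ℝ (Fin d))
    (S : ℕ → Set (EuclideanSpace ℝ (Fin d)))
    (x : ℕ → EuclideanSpace ℝ (Fin d))
    (ω : ℕ → ℝ) (μ G : ℝ) (hμ : 0 < μ) (u : EuclideanSpace ℝ (Fin d))
    (hgrad : ∀ t z, HasGradientAt (f t) (g t z) z)
    (hsc : ∀ t z w, f t z ≥ f t w + ⟪g t w, z - w⟫ + μ / 2 * ‖z - w‖ ^ 2)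
    (hSclosed : ∀ t, IsClosed (S t)) (hSne : ∀ t, (S t).Nonempty)
    (hSconv : ∀ t, Convex ℝ (S t))
    (hω : ∀ t, ∀ a ∈ S t, Metric.infDist a (S (t + 1)) ≤ ω (t + 1))
    (hG : ∀ t, ‖g t (x t)‖ ≤ G)
    (hx1 : x 1 ∈ S 1)
    (hproj : ∀ t, x (t + 1) ∈ S (t + 1) ∧
      ∀ z ∈ S (t + 1),
        ‖x (t + 1) - (x t - (1 / (t * μ)) • g t (x t))‖ ≤
          ‖z - (x t - (1 / (t * μ)) • g t (x t))‖) :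
    ∑ t ∈ Icc 1 T, (f t (x t) - f t u) ≤
      G ^ 2 / μ * (1 + Real.log T) +
        ∑ t ∈ Icc 1 (T - 1),
          (ω (t + 1) / (1 / (t * μ)) + G) * Metric.infDist u (S (t + 1)) :=
  ogd_strongly_convex_time_varying_sets_regret_general hT f g S x ω μ G hμ u hsc hSconv hω hG hproj
end

section
/- Let u ∈ ℝ^d, δ ∈ (0,1], and let g ∈ ℝ^d satisfy the angular condition ⟨g, x − u⟩ ≥ δ‖g‖‖x − u‖ for a given x ∈ ℝ^d. Let f(z) = (2/δ)‖z − u‖ and let f^γ be its Moreau envelope with parameter γ > 0. If ‖x − u‖ ≥ 2γ/δ, then ⟨∇f^γ(x), g⟩ ≥ 2‖g‖. -/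
open RealInnerProductSpace

/-- The Moreau envelope of `f` with parameter `γ`. -/
noncomputable def moreauEnv {d : ℕ} (f : EuclideanSpace ℝ (Fin d) → ℝ) (γ : ℝ)
    (x : EuclideanSpace ℝ (Fin d)) : ℝ :=
  ⨅ y : EuclideanSpace ℝ (Fin d), (f y + ‖y - x‖ ^ 2 / (2 * γ))

/-!
For every `a`-Lipschitz `f`, the Moreau envelope satisfies `f - a²γ/2 ≤ f^γ`; for
`f = a‖· - u‖` this lower bound is attained at every `x` with `a γ ≤ ‖x - u‖`. As `f` lies above
its tangent plane at such an `x`, so does `f^γ`, which touches it at `x`. A differentiable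
function above a supporting affine function has that slope as its gradient, so
`∇f^γ(x) = a (x - u) / ‖x - u‖`, and the angular condition together with `a δ = 2` gives the bound.
-/

theorem HasGradientAt.eq_of_forall_add_inner_le {F : Type*} [NormedAddCommGroup F]
    [InnerProductSpace ℝ F] [CompleteSpace F] {φ : F → ℝ} {x gr v : F}
    (hφ : HasGradientAt φ gr x) (hsupp : ∀ y, φ x + ⟪v, y - x⟫ ≤ φ y) : gr = v := by
  have hmin : IsLocalMin (fun y => φ y - ⟪v, y⟫) x :=
    Filter.Eventually.of_forall fun y => by
      have := hsupp y
      rw [inner_sub_right] at this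
      linarith
  have hzero := hmin.hasFDerivAt_eq_zero (hφ.hasFDerivAt.sub (innerSL ℝ v).hasFDerivAt)
  have hinner : ⟪gr, gr - v⟫ - ⟪v, gr - v⟫ = 0 := by
    simpa using DFunLike.congr_fun hzero (gr - v)
  rwa [← inner_sub_left, inner_self_eq_zero, sub_eq_zero] at hinner

theorem LipschitzWith.sub_le_add_sq_div {E : Type*} [SeminormedAddCommGroup E] {f : E → ℝ}
    {K : NNReal} (hf : LipschitzWith K f) {γ : ℝ} (hγ : 0 < γ) (x z : E) :
    f x - K ^ 2 * γ / 2 ≤ f z + ‖z - x‖ ^ 2 / (2 * γ) := by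
  have hlip : f x ≤ f z + K * ‖z - x‖ := by
    simpa [dist_comm x z, dist_eq_norm] using hf.le_add_mul x z
  have hamgm : K * ‖z - x‖ ≤ ‖z - x‖ ^ 2 / (2 * γ) + K ^ 2 * γ / 2 := by
    rw [div_add' _ _ _ (by positivity), le_div_iff₀ (by positivity)]
    nlinarith [sq_nonneg (‖z - x‖ - K * γ)]
  linarith

theorem norm_sub_add_inner_le {F : Type*} [NormedAddCommGroup F] [InnerProductSpace ℝ F]
    {a : ℝ} (ha : 0 ≤ a) {u x : F} (hx : x ≠ u) (y : F) :
    a * ‖x - u‖ + ⟪(a / ‖x - u‖) • (x - u), y - x⟫ ≤ a * ‖y - u‖ := by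
  have hr : ‖x - u‖ ≠ 0 := norm_ne_zero_iff.mpr (sub_ne_zero.mpr hx)
  have hv : ‖(a / ‖x - u‖) • (x - u)‖ = a := by
    rw [norm_smul, Real.norm_of_nonneg (by positivity)]
    field_simp
  have hvx : ⟪(a / ‖x - u‖) • (x - u), x - u⟫ = a * ‖x - u‖ := by
    rw [real_inner_smul_left, real_inner_self_eq_norm_sq]
    field_simp
  calc a * ‖x - u‖ + ⟪(a / ‖x - u‖) • (x - u), y - x⟫
      = ⟪(a / ‖x - u‖) • (x - u), y - u⟫ := by
        rw [← hvx, ← inner_add_right, sub_add_sub_cancel']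
    _ ≤ ‖(a / ‖x - u‖) • (x - u)‖ * ‖y - u‖ := real_inner_le_norm _ _
    _ = a * ‖y - u‖ := by rw [hv]

theorem lipschitzWith_const_mul_norm_sub {E : Type*} [SeminormedAddCommGroup E] {a : ℝ}
    (ha : 0 ≤ a) (u : E) :
    LipschitzWith a.toNNReal (fun z => a * ‖z - u‖) :=
  LipschitzWith.of_le_add_mul _ fun y z => by
    rw [Real.coe_toNNReal a ha, dist_eq_norm, ← mul_add]
    exact mul_le_mul_of_nonneg_left (norm_sub_le_norm_sub_add_norm_sub y z u |>.trans_eq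
      (add_comm _ _)) ha

section MoreauEnvelope

variable {d : ℕ} {f : EuclideanSpace ℝ (Fin d) → ℝ} {K : NNReal} {γ : ℝ}

theorem LipschitzWith.sub_le_moreauEnv (hf : LipschitzWith K f) (hγ : 0 < γ)
    (x : EuclideanSpace ℝ (Fin d)) : f x - K ^ 2 * γ / 2 ≤ moreauEnv f γ x :=
  le_ciInf fun z => hf.sub_le_add_sq_div hγ x z

theorem LipschitzWith.moreauEnv_le (hf : LipschitzWith K f) (hγ : 0 < γ)
    (x z : EuclideanSpace ℝ (Fin d)) : moreauEnv f γ x ≤ f z + ‖z - x‖ ^ 2 / (2 * γ) :=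
  ciInf_le ⟨_, Set.forall_mem_range.mpr fun z => hf.sub_le_add_sq_div hγ x z⟩ z

/-- Far from `u`, the infimum is attained by moving a distance `a * γ` from `x` towards `u`. -/
theorem moreauEnv_const_mul_norm_sub_le {a : ℝ} (ha : 0 < a) (hγ : 0 < γ)
    (u x : EuclideanSpace ℝ (Fin d)) (hfar : a * γ ≤ ‖x - u‖) :
    moreauEnv (fun z => a * ‖z - u‖) γ x ≤ a * ‖x - u‖ - a ^ 2 * γ / 2 := by
  have hr : 0 < ‖x - u‖ := lt_of_lt_of_le (by positivity) hfar
  set t := a * γ / ‖x - u‖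
  have ht : 0 ≤ 1 - t := sub_nonneg.mpr ((div_le_one hr).mpr hfar)
  have hnorm_u : ‖x - t • (x - u) - u‖ = ‖x - u‖ - a * γ := by
    rw [show x - t • (x - u) - u = (1 - t) • (x - u) by module, norm_smul,
      Real.norm_of_nonneg ht]
    simp only [t]
    field_simp
  have hnorm_x : ‖x - t • (x - u) - x‖ = a * γ := by
    rw [show x - t • (x - u) - x = -(t • (x - u)) by abel, norm_neg, norm_smul,
      Real.norm_of_nonneg (by positivity)]
    simp only [t]
    field_simp
  refine ((lipschitzWith_const_mul_norm_sub ha.le u).moreauEnv_le hγ x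
    (x - t • (x - u))).trans_eq ?_
  rw [hnorm_u, hnorm_x]
  field_simp
  ring

end MoreauEnvelope

theorem moreau_grad_inner_ge_far {d : ℕ}
    (u x g gr : EuclideanSpace ℝ (Fin d)) (δ γ : ℝ)
    (hδ : δ ∈ Set.Ioc (0:ℝ) 1) (hγ : 0 < γ)
    (hang : ⟪g, x - u⟫ ≥ δ * ‖g‖ * ‖x - u‖)
    (hfar : ‖x - u‖ ≥ 2 * γ / δ)
    (hgr : HasGradientAt (moreauEnv (fun z => (2 / δ) * ‖z - u‖) γ) gr x) :
    ⟪gr, g⟫ ≥ 2 * ‖g‖ := by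
  obtain ⟨hδ0, -⟩ := hδ
  set a := 2 / δ
  have ha : 0 < a := by positivity
  have hfar' : a * γ ≤ ‖x - u‖ := by rwa [div_mul_eq_mul_div]
  have hr : 0 < ‖x - u‖ := lt_of_lt_of_le (by positivity) hfar'
  have hgr_eq : gr = (a / ‖x - u‖) • (x - u) := by
    refine hgr.eq_of_forall_add_inner_le fun y => ?_
    have hupper := moreauEnv_const_mul_norm_sub_le ha hγ u x hfar'
    have hlower := (lipschitzWith_const_mul_norm_sub ha.le u).sub_le_moreauEnv hγ y
    have hsupp := norm_sub_add_inner_le ha.le (sub_ne_zero.mp (norm_pos_iff.mp hr)) y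
    rw [Real.coe_toNNReal a ha.le] at hlower
    linarith
  calc ⟪gr, g⟫ = a / ‖x - u‖ * ⟪g, x - u⟫ := by
        rw [hgr_eq, real_inner_smul_left, real_inner_comm]
    _ ≥ a / ‖x - u‖ * (δ * ‖g‖ * ‖x - u‖) := by gcongr
    _ = 2 * ‖g‖ := by simp only [a]; field_simp
end

section
/- Let ν: ℝ^{d₁} × ℝ^{d₂} → ℝ be convex and differentiable in its first argument with ‖∇_x ν(x,y)‖ ≤ G for all (x,y) in a set containing the iterates, and suppose the trajectory satisfies ‖x_t − u‖ ≤ D for t ≤ t₀ and ‖x_t − u‖ ≤ A ρ^{t/n} + B/√T for t > t₀, where ρ ∈ (0,1), A, B, D ≥ 0, n ≥ 1. Then ∑_{t=1}^T (ν(x_t, y_t) − ν(u, y_t)) ≤ G( t₀ D + A·n·ρ^{t₀/n}/(1−ρ^{1/n}) + B√T ). -/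
/-!
Convexity bounds each regret term by `⟪∇ₓν(x_t, y_t), x_t - u⟫ ≤ G‖x_t - u‖`, so the regret is at
most `G` times the total distance of the iterates to `u`. With `r = ρ^(1/n) < 1` we have
`ρ^(t/n) = r^t`: the first `t₀` rounds contribute at most `t₀ D`, the later ones a geometric tail
`A r^t₀ / (1 - r)` plus `T · B/√T = B√T`.
-/

open RealInnerProductSpace Finset

theorem ConvexOn.apply_sub_le_of_hasFDerivAt {E : Type*} [NormedAddCommGroup E] [NormedSpace ℝ E]
    {s : Set E} {f : E → ℝ} {f' : E →L[ℝ] ℝ} {x u : E} (hf : ConvexOn ℝ s f) (hx : x ∈ s)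
    (hu : u ∈ s) (hf' : HasFDerivAt f f' x) : f' (u - x) ≤ f u - f x := by
  have hline : ConvexOn ℝ (AffineMap.lineMap (k := ℝ) x u ⁻¹' s)
      (f ∘ AffineMap.lineMap (k := ℝ) x u) :=
    hf.comp_affineMap _
  have hderiv : HasDerivAt (f ∘ AffineMap.lineMap (k := ℝ) x u) (f' (u - x)) 0 :=
    HasFDerivAt.comp_hasDerivAt (0 : ℝ) (by simpa using hf') AffineMap.hasDerivAt_lineMap
  simpa [slope_def_field] using
    hline.le_slope_of_hasDerivAt (by simpa using hx) (by simpa using hu) zero_lt_one hderiv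

theorem ConvexOn.sub_le_inner_of_hasGradientAt {E : Type*} [NormedAddCommGroup E]
    [InnerProductSpace ℝ E] [CompleteSpace E] {f : E → ℝ} {g x : E} (hf : ConvexOn ℝ Set.univ f)
    (hg : HasGradientAt f g x) (u : E) : f x - f u ≤ ⟪g, x - u⟫ := by
  have := hf.apply_sub_le_of_hasFDerivAt (Set.mem_univ x) (Set.mem_univ u)
    (hasGradientAt_iff_hasFDerivAt.mp hg)
  rw [InnerProductSpace.toDual_apply_apply, ← neg_sub x u, inner_neg_right] at this
  linarith

theorem Real.rpow_div_natCast_eq_pow {ρ : ℝ} (hρ : 0 ≤ ρ) (t : ℕ) {n : ℕ} (hn : n ≠ 0) :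
    ρ ^ ((t : ℝ) / n) = (ρ ^ ((1 : ℝ) / n)) ^ t := by
  rw [← Real.rpow_mul_natCast hρ]
  congr 1
  field_simp

theorem sum_Ioc_pow_le_of_lt_one {r : ℝ} (hr₀ : 0 ≤ r) (hr₁ : r < 1) (a b : ℕ) :
    ∑ t ∈ Ioc a b, r ^ t ≤ r ^ a / (1 - r) :=
  calc ∑ t ∈ Ioc a b, r ^ t ≤ ∑ t ∈ Ico a (b + 1), r ^ t :=
        sum_le_sum_of_subset_of_nonneg (fun t ht => by simp only [mem_Ioc, mem_Ico] at ht ⊢; omega)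
          (fun t _ _ => by positivity)
    _ ≤ r ^ a / (1 - r) := geom_sum_Ico_le_of_lt_one hr₀ hr₁

theorem sum_Icc_le_of_bounded_then_geometric {e : ℕ → ℝ} {T t₀ : ℕ} {D A r c : ℝ}
    (hD : 0 ≤ D) (hA : 0 ≤ A) (hr₀ : 0 ≤ r) (hr₁ : r < 1) (hc : 0 ≤ c)
    (hnear : ∀ t ∈ Icc 1 T, t ≤ t₀ → e t ≤ D)
    (hfar : ∀ t ∈ Icc 1 T, t₀ < t → e t ≤ A * r ^ t + c) :
    ∑ t ∈ Icc 1 T, e t ≤ t₀ * D + A * r ^ t₀ / (1 - r) + T * c := by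
  have hfar_eq : (Icc 1 T).filter (fun t => ¬ t ≤ t₀) = Ioc t₀ T := by
    ext t; simp only [mem_filter, mem_Icc, mem_Ioc]; omega
  have hnear_card : #((Icc 1 T).filter (· ≤ t₀)) ≤ t₀ := calc
    #((Icc 1 T).filter (· ≤ t₀)) ≤ #(Icc 1 t₀) :=
      card_le_card fun t ht => by simp only [mem_filter, mem_Icc] at ht ⊢; omega
    _ = t₀ := by simp
  have hnear_sum : ∑ t ∈ (Icc 1 T).filter (· ≤ t₀), e t ≤ t₀ * D := calc
    ∑ t ∈ (Icc 1 T).filter (· ≤ t₀), e t ≤ #((Icc 1 T).filter (· ≤ t₀)) • D :=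
      sum_le_card_nsmul _ _ _ fun t ht => hnear t (mem_filter.1 ht).1 (mem_filter.1 ht).2
    _ ≤ t₀ * D := by
      rw [nsmul_eq_mul]; exact mul_le_mul_of_nonneg_right (by exact_mod_cast hnear_card) hD
  have hfar_sum : ∑ t ∈ Ioc t₀ T, e t ≤ A * r ^ t₀ / (1 - r) + T * c := calc
    ∑ t ∈ Ioc t₀ T, e t ≤ ∑ t ∈ Ioc t₀ T, (A * r ^ t + c) := sum_le_sum fun t ht => by
      rw [mem_Ioc] at ht
      exact hfar t (mem_Icc.2 ⟨by omega, ht.2⟩) ht.1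
    _ = A * ∑ t ∈ Ioc t₀ T, r ^ t + (T - t₀ : ℕ) * c := by
      rw [sum_add_distrib, ← mul_sum, sum_const, Nat.card_Ioc, nsmul_eq_mul]
    _ ≤ A * (r ^ t₀ / (1 - r)) + T * c := by
      gcongr
      · exact sum_Ioc_pow_le_of_lt_one hr₀ hr₁ t₀ T
      · exact_mod_cast Nat.sub_le T t₀
    _ = A * r ^ t₀ / (1 - r) + T * c := by ring
  rw [← sum_filter_add_sum_filter_not (Icc 1 T) (· ≤ t₀), hfar_eq]
  linarith

theorem regret_from_convergence {d₁ d₂ T t₀ n : ℕ} (hT : 1 ≤ T) (hn : 1 ≤ n)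
    (ν : EuclideanSpace ℝ (Fin d₁) → EuclideanSpace ℝ (Fin d₂) → ℝ)
    (gν : EuclideanSpace ℝ (Fin d₁) → EuclideanSpace ℝ (Fin d₂) → EuclideanSpace ℝ (Fin d₁))
    (x : ℕ → EuclideanSpace ℝ (Fin d₁)) (y : ℕ → EuclideanSpace ℝ (Fin d₂))
    (u : EuclideanSpace ℝ (Fin d₁)) (G A B D ρ : ℝ)
    (hρ : ρ ∈ Set.Ioo (0:ℝ) 1) (hA : 0 ≤ A) (hB : 0 ≤ B) (hD : 0 ≤ D)
    (hconv : ∀ z, ConvexOn ℝ Set.univ (fun w => ν w z))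
    (hgrad : ∀ z w, HasGradientAt (fun w' => ν w' z) (gν w z) w)
    (hG : ∀ t ∈ Icc 1 T, ‖gν (x t) (y t)‖ ≤ G)
    (hnear : ∀ t ∈ Icc 1 T, t ≤ t₀ → ‖x t - u‖ ≤ D)
    (hconvrate : ∀ t ∈ Icc 1 T, t₀ < t →
      ‖x t - u‖ ≤ A * ρ ^ ((t : ℝ) / n) + B / Real.sqrt T) :
    ∑ t ∈ Icc 1 T, (ν (x t) (y t) - ν u (y t)) ≤
      G * (t₀ * D + A * n * ρ ^ ((t₀ : ℝ) / n) / (1 - ρ ^ ((1 : ℝ) / n))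
        + B * Real.sqrt T) := by
  have hn₀ : n ≠ 0 := by omega
  set r := ρ ^ ((1 : ℝ) / n)
  have hr₀ : 0 ≤ r := Real.rpow_nonneg hρ.1.le _
  have hr₁ : r < 1 := Real.rpow_lt_one hρ.1.le hρ.2 (by positivity)
  have hG₀ : 0 ≤ G := (norm_nonneg _).trans (hG 1 (mem_Icc.2 ⟨le_rfl, hT⟩))
  have hregret_le (t) (ht : t ∈ Icc 1 T) : ν (x t) (y t) - ν u (y t) ≤ G * ‖x t - u‖ := calc
    _ ≤ ⟪gν (x t) (y t), x t - u⟫ := (hconv (y t)).sub_le_inner_of_hasGradientAt (hgrad _ _) u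
    _ ≤ ‖gν (x t) (y t)‖ * ‖x t - u‖ := real_inner_le_norm _ _
    _ ≤ G * ‖x t - u‖ := by gcongr; exact hG t ht
  have hdist : ∑ t ∈ Icc 1 T, ‖x t - u‖ ≤ t₀ * D + A * r ^ t₀ / (1 - r) + T * (B / √T) :=
    sum_Icc_le_of_bounded_then_geometric hD hA hr₀ hr₁ (by positivity) hnear fun t ht ht₀ => by
      simpa only [Real.rpow_div_natCast_eq_pow hρ.1.le t hn₀] using hconvrate t ht ht₀
  have hgeom : A * r ^ t₀ / (1 - r) ≤ A * n * r ^ t₀ / (1 - r) := by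
    gcongr
    exact le_mul_of_one_le_right hA (by exact_mod_cast hn)
  calc ∑ t ∈ Icc 1 T, (ν (x t) (y t) - ν u (y t))
      ≤ ∑ t ∈ Icc 1 T, G * ‖x t - u‖ := sum_le_sum hregret_le
    _ = G * ∑ t ∈ Icc 1 T, ‖x t - u‖ := (mul_sum ..).symm
    _ ≤ G * (t₀ * D + A * r ^ t₀ / (1 - r) + T * (B / √T)) := by gcongr
    _ ≤ G * (t₀ * D + A * n * ρ ^ ((t₀ : ℝ) / n) / (1 - r) + B * √T) := by
      rw [Real.rpow_div_natCast_eq_pow hρ.1.le t₀ hn₀, mul_div_left_comm, Real.div_sqrt]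
      gcongr
end
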